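/- arXiv:1304.0098 — 9 statements merged into one kernel-verified Lean document; each statement's English description precedes it below -/
import Mathlib

section
/- Let R be a ring with 1 and (a,b) ∈ R² an admissible pair (i.e., it is the first row of some invertible 2×2 matrix over R). If s ∈ R has a left inverse, then R·(a,b) = R·(s·a, s·b) as left submodules of R²; conversely, if R·(a,b) = R·(s·a, s·b), then s has a left inverse. -/
open Matrix

/-- A pair `(a,b)` is admissible if it is the first row of an invertible 2×2 matrix. -/
def Admissible {R : Type*} [Ring R] (a b : R) : Prop :=
  ∃ c d : R, IsUnit (Matrix.of ![![a, b], ![c, d]])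

/-- The cyclic left submodule of `R²` generated by a vector. -/
def cyc {R : Type*} [Ring R] (v : Fin 2 → R) : Submodule R (Fin 2 → R) :=
  Submodule.span R {v}

/-- The projective line over `R`: the orbit of `R·(1,0)` under `GL₂(R)`
(acting by right multiplication on row vectors). -/
def ProjLine (R : Type*) [Ring R] : Set (Submodule R (Fin 2 → R)) :=
  {p | ∃ γ : (Matrix (Fin 2) (Fin 2) R)ˣ,
    p = cyc (Matrix.vecMul ![1, 0] (γ.val))}

/-- Two points are distant if the pair lies in the `GL₂(R)`-orbit of
`(R·(1,0), R·(0,1))`. -/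
def Distant {R : Type*} [Ring R] (p q : Submodule R (Fin 2 → R)) : Prop :=
  ∃ γ : (Matrix (Fin 2) (Fin 2) R)ˣ,
    p = cyc (Matrix.vecMul ![1, 0] (γ.val)) ∧
    q = cyc (Matrix.vecMul ![0, 1] (γ.val))

theorem Matrix.exists_dotProduct_eq_one_of_isUnit {n R : Type*} [Fintype n] [DecidableEq n]
    [Ring R] {A : Matrix n n R} (hA : IsUnit A) (i : n) : ∃ x : n → R, A i ⬝ᵥ x = 1 := by
  obtain ⟨B, hB⟩ := hA.exists_right_inv
  exact ⟨fun j => B j i, by rw [← Matrix.mul_apply', hB, one_apply_eq]⟩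

theorem Admissible.exists_dotProduct_eq_one {R : Type*} [Ring R] {a b : R} (h : Admissible a b) :
    ∃ x : Fin 2 → R, ![a, b] ⬝ᵥ x = 1 := by
  obtain ⟨c, d, hM⟩ := h
  exact Matrix.exists_dotProduct_eq_one_of_isUnit hM 0

/-- Pairing `(l * s) • v = v` with a right inverse `x` of the row `v` forces `l * s = 1`. -/
theorem span_singleton_smul_eq_iff_exists_mul_eq_one {n R : Type*} [Fintype n] [Ring R]
    {v x : n → R} (hv : v ⬝ᵥ x = 1) (s : R) :
    Submodule.span R {s • v} = Submodule.span R {v} ↔ ∃ l : R, l * s = 1 := by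
  constructor
  · intro h
    have hmem : v ∈ Submodule.span R {s • v} := h ▸ Submodule.mem_span_singleton_self v
    obtain ⟨l, hl⟩ := Submodule.mem_span_singleton.mp hmem
    refine ⟨l, ?_⟩
    calc l * s = (l * s) * (v ⬝ᵥ x) := by rw [hv, mul_one]
      _ = ((l * s) • v) ⬝ᵥ x := by rw [smul_dotProduct, smul_eq_mul]
      _ = 1 := by rw [mul_smul, hl, hv]
  · rintro ⟨l, hl⟩
    refine le_antisymm (Submodule.span_singleton_smul_le R s v) ?_
    rw [Submodule.span_singleton_le_iff_mem, Submodule.mem_span_singleton]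
    exact ⟨l, by rw [smul_smul, hl, one_smul]⟩

theorem stmt0 {R : Type*} [Ring R] (a b s : R) (h : Admissible a b) :
    (∃ l : R, l * s = 1) ↔ cyc ![a, b] = cyc ![s * a, s * b] := by
  obtain ⟨x, hx⟩ := h.exists_dotProduct_eq_one
  have hsmul : ![s * a, s * b] = s • ![a, b] := by simp
  rw [cyc, cyc, hsmul, eq_comm]
  exact (span_singleton_smul_eq_iff_exists_mul_eq_one hx s).symm
end

section
/- Let R be a ring with 1 and (a,b) ∈ R² an admissible pair. For s ∈ R, the pair (s·a, s·b) is admissible if and only if s has a right inverse. -/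
open Matrix

/-!
The first row of an invertible matrix generates `R` as a right ideal, so admissibility of
`(s a, s b)` gives `s a x + s b y = 1`, and `s` has the right inverse `a x + b y`.
Conversely, if `s r = 1` then `e = 1 - r s` is an idempotent with `s e = 0 = e r`, so
`!![s, 0; e, r]` is invertible with inverse `!![r, e; 0, s]`; multiplying an invertible matrix
with first row `(a, b)` by it on the left gives first row `(s a, s b)`.
-/

section

variable {R : Type*} [Ring R]

theorem Admissible.exists_mul_add_mul_eq_one {a b : R} (h : Admissible a b) :
    ∃ x y : R, a * x + b * y = 1 := by
  obtain ⟨c, d, hM⟩ := h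
  obtain ⟨P, hP⟩ := hM.exists_right_inv
  refine ⟨P 0 0, P 1 0, ?_⟩
  simpa [Matrix.mul_apply] using congrFun (congrFun hP 0) 0

theorem Admissible.mul_left {a b s c d : R} (h : Admissible a b)
    (hD : IsUnit !![s, 0; c, d]) : Admissible (s * a) (s * b) := by
  obtain ⟨c', d', hM⟩ := h
  refine ⟨c * a + d * c', c * b + d * d', ?_⟩
  convert hD.mul hM using 1
  simp

theorem isUnit_matrix_of_mul_eq_one {s r : R} (h : s * r = 1) :
    IsUnit !![s, 0; 1 - r * s, r] := by
  have hs : s * (1 - r * s) = 0 := by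
    rw [mul_sub, ← mul_assoc, h, one_mul, mul_one, sub_self]
  have hr : (1 - r * s) * r = 0 := by
    rw [sub_mul, mul_assoc, h, one_mul, mul_one, sub_self]
  have he : (1 - r * s) * (1 - r * s) = 1 - r * s := by
    rw [mul_sub, mul_one, ← mul_assoc, hr, zero_mul, sub_zero]
  refine ⟨⟨_, !![r, 1 - r * s; 0, s], ?_, ?_⟩, rfl⟩ <;>
    simp [Matrix.one_fin_two, h, hs, hr, he]

end

theorem stmt1 {R : Type*} [Ring R] (a b s : R) (h : Admissible a b) :
    Admissible (s * a) (s * b) ↔ ∃ r : R, s * r = 1 := by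
  constructor
  · intro hs
    obtain ⟨x, y, hxy⟩ := hs.exists_mul_add_mul_eq_one
    exact ⟨a * x + b * y, by rw [mul_add, ← mul_assoc, ← mul_assoc, hxy]⟩
  · rintro ⟨r, hr⟩
    exact h.mul_left (isUnit_matrix_of_mul_eq_one hr)
end

section
/- A ring R is Dedekind-finite if and only if no point of the projective line P(R) is properly contained in another point of P(R). -/
open Matrix

/-!
If `R·v ⊊ R·w` where `v` is the first row of an invertible `γ`, write `v = r • w`; applying `γ⁻¹`
shows that `r` has a right inverse `s`. Dedekind-finiteness makes `s` a left inverse too, so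
`w = s • v ∈ R·v`, a contradiction. Conversely, if `a * b = 1` then `(a, 0)` is the first row of
the invertible matrix `!![a, 0; 1 - b * a, b]`, so `R·(a, 0) ⊆ R·(1, 0)` are two points of the
projective line and must coincide; this gives a left inverse of `a`, which then equals `b`.
-/

section

variable {R : Type*} [Ring R]

theorem mul_vecMul_inv_eq_one_of_smul_eq_vecMul {γ : (Matrix (Fin 2) (Fin 2) R)ˣ} {r : R}
    {w : Fin 2 → R} (h : r • w = vecMul ![1, 0] γ.val) :
    r * vecMul w (γ⁻¹).val 0 = 1 := by
  have : vecMul (vecMul ![1, 0] γ.val) (γ⁻¹).val = ![1, 0] := by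
    rw [vecMul_vecMul, Units.mul_inv, vecMul_one]
  rw [← h, smul_vecMul] at this
  simpa using congrFun this 0

theorem cyc_le_of_cyc_vecMul_le (hR : ∀ a b : R, a * b = 1 → b * a = 1)
    (γ : (Matrix (Fin 2) (Fin 2) R)ˣ) {w : Fin 2 → R}
    (h : cyc (vecMul ![1, 0] γ.val) ≤ cyc w) : cyc w ≤ cyc (vecMul ![1, 0] γ.val) := by
  obtain ⟨r, hr⟩ := Submodule.mem_span_singleton.mp
    (h (Submodule.mem_span_singleton_self _))
  have hsr := hR _ _ (mul_vecMul_inv_eq_one_of_smul_eq_vecMul hr)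
  refine Submodule.span_singleton_le_iff_mem _ _ |>.mpr (Submodule.mem_span_singleton.mpr ?_)
  exact ⟨_, by rw [← hr, smul_smul, hsr, one_smul]⟩

def unitOfMulEqOne {a b : R} (hab : a * b = 1) : (Matrix (Fin 2) (Fin 2) R)ˣ where
  val := !![a, 0; 1 - b * a, b]
  inv := !![b, 1 - b * a; 0, a]
  val_inv := by
    have hbab : b * a * b = b := by rw [mul_assoc, hab, mul_one]
    ext i j
    fin_cases i <;> fin_cases j <;> simp [mul_sub, sub_mul, ← mul_assoc, hab, hbab]
  inv_val := by
    have hbab : b * a * b = b := by rw [mul_assoc, hab, mul_one]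
    ext i j
    fin_cases i <;> fin_cases j <;> simp [mul_sub, sub_mul, ← mul_assoc, hab, hbab]

theorem cyc_mem_projLine_of_mul_eq_one {a b : R} (hab : a * b = 1) :
    cyc ![a, 0] ∈ ProjLine R :=
  ⟨unitOfMulEqOne hab, by ext; simp [unitOfMulEqOne]⟩

end

theorem stmt6 {R : Type*} [Ring R] :
    (∀ a b : R, a * b = 1 → b * a = 1) ↔
      ∀ p ∈ ProjLine R, ∀ q ∈ ProjLine R, ¬ p < q := by
  constructor
  · rintro hR p ⟨γ, rfl⟩ q ⟨_, rfl⟩ hlt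
    exact hlt.not_ge (cyc_le_of_cyc_vecMul_le hR γ hlt.le)
  · intro h a b hab
    have hq : cyc ![(1 : R), 0] ∈ ProjLine R := ⟨1, by simp⟩
    have hle : cyc ![a, 0] ≤ cyc ![(1 : R), 0] :=
      Submodule.span_singleton_le_iff_mem _ _ |>.mpr
        (Submodule.mem_span_singleton.mpr ⟨a, by ext i; fin_cases i <;> simp⟩)
    have heq := hle.lt_or_eq.resolve_left (h _ (cyc_mem_projLine_of_mul_eq_one hab) _ hq)
    obtain ⟨r, hr⟩ := Submodule.mem_span_singleton.mp
      (heq ▸ Submodule.mem_span_singleton_self ![(1 : R), 0] : ![(1 : R), 0] ∈ cyc ![a, 0])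
    have hra : r * a = 1 := by simpa using congrFun hr 0
    rwa [← left_inv_eq_right_inv hra hab]
end

section
/- If R is not Dedekind-finite, then there exists a strictly increasing infinite chain p₀ ⊊ p₁ ⊊ p₂ ⊊ ⋯ of points of the projective line P(R). -/
open Matrix

/-!
If `y * x = 1`, then `!![x, 1 - x * y; 0, y]` is invertible with inverse `!![y, 0; 1 - x * y, x]`,
so `R·(x, 1 - x * y)` is a point of `P(R)`. When `a * b = 1`, passing from `(x, y)` to `(x * b, a * y)`
preserves `y * x = 1` and enlarges the point; the enlargement is strict exactly because `b * a ≠ 1`.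
Starting from `(1, 1)` this gives the chain `R·(bⁿ, 1 - bⁿ * aⁿ)`.
-/

section

variable {R : Type*} [Ring R]

theorem Admissible.cyc_mem_projLine {a b : R} (h : Admissible a b) : cyc ![a, b] ∈ ProjLine R := by
  obtain ⟨c, d, hu⟩ := h
  refine ⟨hu.unit, congrArg cyc ?_⟩
  ext j
  fin_cases j <;> simp [Matrix.vecMul, dotProduct, Fin.sum_univ_two]

theorem admissible_of_mul_eq_one {x y : R} (hyx : y * x = 1) : Admissible x (1 - x * y) := by
  have hxyx : x * y * x = x := by rw [mul_assoc, hyx, mul_one]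
  have hyxy : y * (x * y) = y := by rw [← mul_assoc, hyx, one_mul]
  refine ⟨0, y, isUnit_iff_exists.2 ⟨!![y, 0; 1 - x * y, x], ?_, ?_⟩⟩
  all_goals
    rw [Matrix.mul_fin_two, Matrix.one_fin_two]
    ext i j
    fin_cases i <;> fin_cases j <;> simp [mul_sub, sub_mul, hyx, hxyx, hyxy, mul_assoc]

theorem cyc_le_cyc_mul {x y a b : R} (hyx : y * x = 1) (hab : a * b = 1) :
    cyc ![x, 1 - x * y] ≤ cyc ![x * b, 1 - x * b * (a * y)] := by
  refine (Submodule.span_singleton_le_iff_mem _ _).2 (Submodule.mem_span_singleton.2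
    ⟨x * a * y + 1 - x * y, ?_⟩)
  ext j
  fin_cases j
  · show (x * a * y + 1 - x * y) * (x * b) = x
    linear_combination (norm := noncomm_ring) x * a * hyx * b - x * hyx * b + x * hab
  · show (x * a * y + 1 - x * y) * (1 - x * b * (a * y)) = 1 - x * y
    linear_combination (norm := noncomm_ring)
      -(x * a * hyx * b * a * y) - x * hab * a * y + x * hyx * b * a * y

theorem not_cyc_mul_le_cyc {x y a b : R} (hyx : y * x = 1) (hba : b * a ≠ 1) :
    ¬ cyc ![x * b, 1 - x * b * (a * y)] ≤ cyc ![x, 1 - x * y] := by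
  intro hle
  obtain ⟨s, hs⟩ := Submodule.mem_span_singleton.1 ((Submodule.span_singleton_le_iff_mem _ _).1 hle)
  have hs₀ : s * x = x * b := by simpa using congrFun hs 0
  have hs₁ : s * (1 - x * y) = 1 - x * b * (a * y) := by simpa using congrFun hs 1
  have hs_eq : s = x * b * y + (1 - x * b * (a * y)) := by
    calc s = s * x * y + s * (1 - x * y) := by noncomm_ring
      _ = _ := by rw [hs₀, hs₁]
  have hx : x * b * a = x := by
    rw [hs_eq] at hs₀
    linear_combination (norm := noncomm_ring) -hs₀ + x * b * hyx - x * b * a * hyx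
  exact hba <| calc
    b * a = y * (x * b * a) := by rw [← mul_assoc, ← mul_assoc, hyx, one_mul]
    _ = 1 := by rw [hx, hyx]

end

theorem stmt7 {R : Type*} [Ring R] (h : ¬ ∀ a b : R, a * b = 1 → b * a = 1) :
    ∃ p : ℕ → Submodule R (Fin 2 → R),
      (∀ n, p n ∈ ProjLine R) ∧ ∀ n, p n < p (n + 1) := by
  obtain ⟨a, b, hab, hba⟩ : ∃ a b : R, a * b = 1 ∧ b * a ≠ 1 := by simpa using h
  refine ⟨fun n => cyc ![b ^ n, 1 - b ^ n * a ^ n],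
    fun n => (admissible_of_mul_eq_one (pow_mul_pow_eq_one n hab)).cyc_mem_projLine, fun n => ?_⟩
  have hle := cyc_le_cyc_mul (pow_mul_pow_eq_one n hab) hab
  have hnot := not_cyc_mul_le_cyc (a := a) (pow_mul_pow_eq_one n hab) hba
  rw [← pow_succ, ← pow_succ'] at hle hnot
  exact lt_of_le_not_ge hle hnot
end

section
/- If R has stable rank 2 (i.e., for every unimodular pair (a,b) there exists c ∈ R such that a + b·c has a right inverse), then R is Dedekind-finite. -/
open Matrix

/-!
If `a * b = 1`, the pair `(b, 1 - b * a)` is unimodular, so stable rank 2 yields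
`u = b + (1 - b * a) * c` with a right inverse. Since `a * (1 - b * a) = 0`, also `a * u = 1`;
thus `u` is a unit with inverse `a`, and uniqueness of inverses forces `u = b`, i.e. `b * a = 1`.
-/

theorem mul_add_one_sub_mul_mul_eq_one {R : Type*} [Ring R] {a b : R} (hab : a * b = 1) (c : R) :
    a * (b + (1 - b * a) * c) = 1 := by
  have h : a * (1 - b * a) = 0 := by rw [mul_sub, mul_one, ← mul_assoc, hab, one_mul, sub_self]
  rw [mul_add, ← mul_assoc, h, zero_mul, add_zero, hab]

theorem stmt8 {R : Type*} [Ring R]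
    (h : ∀ a b : R, (∃ x y : R, a * x + b * y = 1) → ∃ c r : R, (a + b * c) * r = 1) :
    ∀ a b : R, a * b = 1 → b * a = 1 := by
  intro a b hab
  obtain ⟨c, r, hur⟩ := h b (1 - b * a) ⟨a, 1, by rw [mul_one, add_sub_cancel]⟩
  have hau := mul_add_one_sub_mul_mul_eq_one hab c
  have hua : (b + (1 - b * a) * c) * a = 1 := left_inv_eq_right_inv hau hur ▸ hur
  rw [← left_inv_eq_right_inv hua hab, hua]
end

section
/- Two points p, q of the projective line P(R) are distant if and only if p and q are complementary submodules of R², i.e., p ⊕ q = R². -/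
/-!
A point of `P(R)` is `R·u` with `u` the first row of an invertible matrix, so `x ↦ x • u` is
injective. For two such points `R·u`, `R·v`, right multiplication by the matrix with rows `u`, `v`,
`(x, y) ↦ x • u + y • v`, is injective iff `R·u ⊓ R·v = ⊥` and surjective iff `R·u ⊔ R·v = ⊤`.
So the points are complementary iff that matrix is invertible, and it then moves
`(R·(1,0), R·(0,1))` to `(R·u, R·v)`.
-/

open Matrix

namespace Matrix

open Submodule

variable {R : Type*} [Ring R]

theorem vecMul_bijective_iff_isUnit {n : Type*} [Fintype n] [DecidableEq n]
    {M : Matrix n n R} : Function.Bijective M.vecMul ↔ IsUnit M := by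
  refine ⟨fun hM ↦ ?_, fun hM ↦ ⟨vecMul_injective_of_isUnit hM, ?_⟩⟩
  · obtain ⟨B, hBM⟩ := vecMul_surjective_iff_exists_left_inverse.mp hM.2
    -- over a noncommutative ring a left inverse need not be two-sided; injectivity makes it so
    have hMB : M * B = 1 :=
      isRightRegular_iff_vecMul_injective.mpr hM.1 <| by
        simp only [Matrix.mul_assoc, hBM, Matrix.mul_one, Matrix.one_mul]
    exact ⟨⟨M, B, hMB, hBM⟩, rfl⟩
  · obtain ⟨B, -, hBM⟩ := isUnit_iff_exists.mp hM
    exact vecMul_surjective_iff_exists_left_inverse.mpr ⟨B, hBM⟩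

theorem smul_row_injective_of_isUnit {n : Type*} [Fintype n] [DecidableEq n]
    {M : Matrix n n R} (hM : IsUnit M) (i : n) : Function.Injective fun x : R ↦ x • M i := by
  intro x y hxy
  refine Pi.single_injective i (vecMul_injective_of_isUnit hM ?_)
  change Pi.single i x ᵥ* M = Pi.single i y ᵥ* M
  rwa [single_vecMul, single_vecMul]

theorem vecMul_fin_two (w : Fin 2 → R) (M : Matrix (Fin 2) (Fin 2) R) :
    w ᵥ* M = w 0 • M 0 + w 1 • M 1 := by
  funext j
  simp only [vecMul, dotProduct, Fin.sum_univ_two, Pi.add_apply, Pi.smul_apply, smul_eq_mul]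

theorem cons_one_zero_vecMul (M : Matrix (Fin 2) (Fin 2) R) : ![1, 0] ᵥ* M = M 0 := by
  simp [vecMul_fin_two]

theorem cons_zero_one_vecMul (M : Matrix (Fin 2) (Fin 2) R) : ![0, 1] ᵥ* M = M 1 := by
  simp [vecMul_fin_two]

theorem isCompl_span_rows_of_vecMul_bijective {M : Matrix (Fin 2) (Fin 2) R}
    (hM : Function.Bijective M.vecMul) : IsCompl (span R {M 0}) (span R {M 1}) := by
  constructor
  · rw [disjoint_def]
    rintro _ hx hy
    obtain ⟨a, rfl⟩ := mem_span_singleton.mp hx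
    obtain ⟨b, hb⟩ := mem_span_singleton.mp hy
    have hab : ![a, -b] ᵥ* M = 0 ᵥ* M := by simp [vecMul_fin_two, hb]
    have ha : a = 0 := by simpa using congrFun (hM.1 hab) 0
    rw [ha, zero_smul]
  · rw [codisjoint_iff, eq_top_iff]
    rintro w -
    obtain ⟨z, rfl⟩ := hM.2 w
    show z ᵥ* M ∈ _
    rw [vecMul_fin_two]
    exact add_mem_sup (smul_mem _ _ (mem_span_singleton_self _))
      (smul_mem _ _ (mem_span_singleton_self _))

theorem vecMul_bijective_of_isCompl_span_rows {M : Matrix (Fin 2) (Fin 2) R}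
    (h₀ : Function.Injective fun x : R ↦ x • M 0) (h₁ : Function.Injective fun x : R ↦ x • M 1)
    (hM : IsCompl (span R {M 0}) (span R {M 1})) : Function.Bijective M.vecMul := by
  constructor
  · rw [← coe_vecMulLinear, injective_iff_map_eq_zero]
    intro w hw
    rw [vecMulLinear_apply, vecMul_fin_two] at hw
    have hw₀ : w 0 • M 0 = 0 := by
      refine disjoint_def.mp hM.1 _ (smul_mem _ _ (mem_span_singleton_self _)) ?_
      rw [eq_neg_of_add_eq_zero_left hw]
      exact neg_mem (smul_mem _ _ (mem_span_singleton_self _))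
    have hw₁ : w 1 • M 1 = 0 := by rwa [hw₀, zero_add] at hw
    ext i
    fin_cases i
    · exact h₀ (hw₀.trans (zero_smul R _).symm)
    · exact h₁ (hw₁.trans (zero_smul R _).symm)
  · intro w
    obtain ⟨a, ha, b, hb, rfl⟩ := mem_sup.mp (hM.codisjoint.eq_top ▸ mem_top : w ∈ _)
    obtain ⟨x, rfl⟩ := mem_span_singleton.mp ha
    obtain ⟨y, rfl⟩ := mem_span_singleton.mp hb
    exact ⟨![x, y], by simp [vecMul_fin_two]⟩

end Matrix

theorem stmt12 {R : Type*} [Ring R] (p q : Submodule R (Fin 2 → R))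
    (hp : p ∈ ProjLine R) (hq : q ∈ ProjLine R) :
    Distant p q ↔ IsCompl p q := by
  constructor
  · rintro ⟨γ, rfl, rfl⟩
    rw [cyc, cyc, cons_one_zero_vecMul, cons_zero_one_vecMul]
    exact isCompl_span_rows_of_vecMul_bijective (vecMul_bijective_iff_isUnit.mpr γ.isUnit)
  · obtain ⟨α, rfl⟩ := hp
    obtain ⟨β, rfl⟩ := hq
    intro hpq
    simp only [Distant, cyc, cons_one_zero_vecMul, cons_zero_one_vecMul] at hpq ⊢
    let M : Matrix (Fin 2) (Fin 2) R := of ![α 0, β 0]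
    have hM : IsUnit M := vecMul_bijective_iff_isUnit.mp <|
      vecMul_bijective_of_isCompl_span_rows (smul_row_injective_of_isUnit α.isUnit 0)
        (smul_row_injective_of_isUnit β.isUnit 0) hpq
    exact ⟨hM.unit, rfl, rfl⟩
end

section
/- Let φ: R → S be a unital ring homomorphism. The induced map φ̄: P(R) → P(S) on projective lines is injective if and only if φ is injective. -/
/-!
If `(a, b)` is the first row of `γ ∈ GL₂(R)`, then `v ∈ R·(a, b)` exactly when the second
coordinate of `v γ⁻¹` vanishes. Since `φ(γ) ∈ GL₂(S)` has first row `(φ a, φ b)` and inverse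
`φ(γ⁻¹)`, this condition is carried along by `φ`, and an injective `φ` reflects it.
Conversely, the admissible pairs `(1, x)` give distinct points for distinct `x`.
-/

open Matrix

section SpanRow

variable {R : Type*} [Ring R] {n : Type*} [Fintype n] [DecidableEq n]

theorem mem_span_row_iff (γ : (Matrix n n R)ˣ) (i : n) (u : n → R) :
    u ∈ Submodule.span R {γ.val.row i} ↔ ∀ j ≠ i, (u ᵥ* γ⁻¹.val) j = 0 := by
  have hrow : γ.val.row i ᵥ* γ⁻¹.val = Pi.single i 1 := by
    rw [← single_one_vecMul, vecMul_vecMul, Units.mul_inv, vecMul_one]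
  rw [Submodule.mem_span_singleton]
  constructor
  · rintro ⟨r, rfl⟩ j hj
    rw [smul_vecMul, hrow, Pi.smul_apply, Pi.single_eq_of_ne hj, smul_zero]
  · intro h
    refine ⟨(u ᵥ* γ⁻¹.val) i, ?_⟩
    have hsingle : u ᵥ* γ⁻¹.val = Pi.single i ((u ᵥ* γ⁻¹.val) i) := by
      ext j
      by_cases hj : j = i
      · subst hj; simp
      · rw [h j hj, Pi.single_eq_of_ne hj]
    calc (u ᵥ* γ⁻¹.val) i • γ.val.row i = u ᵥ* γ⁻¹.val ᵥ* γ.val := by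
          rw [hsingle, single_vecMul, Pi.single_eq_same]
      _ = u := by rw [vecMul_vecMul, Units.inv_mul, vecMul_one]

theorem mem_span_row_of_map_mem {S : Type*} [Ring S] {φ : R →+* S}
    (hφ : Function.Injective φ) (γ : (Matrix n n R)ˣ) (i : n) {u : n → R}
    (h : φ ∘ u ∈ Submodule.span S {(γ.val.map φ).row i}) :
    u ∈ Submodule.span R {γ.val.row i} := by
  let γS : (Matrix n n S)ˣ := Units.map (RingHom.mapMatrix φ).toMonoidHom γ
  have hγS : γS.val = γ.val.map φ := rfl
  have hγS_inv : γS⁻¹.val = γ⁻¹.val.map φ := rfl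
  rw [← hγS, mem_span_row_iff] at h
  refine (mem_span_row_iff γ i u).2 fun j hj => hφ ?_
  rw [map_zero, RingHom.map_vecMul, ← hγS_inv, h j hj]

end SpanRow

theorem admissible_one {R : Type*} [Ring R] (x : R) : Admissible 1 x := by
  refine ⟨0, 1, ⟨Matrix.of ![![1, x], ![0, 1]], Matrix.of ![![1, -x], ![0, 1]], ?_, ?_⟩, rfl⟩ <;>
  · ext i j
    fin_cases i <;> fin_cases j <;> simp [Matrix.mul_apply]

theorem cyc_vecCons_one_injective {R : Type*} [Ring R] :
    Function.Injective fun x : R => cyc ![1, x] := by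
  intro x y (h : cyc ![1, x] = cyc ![1, y])
  have hmem : ![1, x] ∈ cyc ![1, y] := h ▸ Submodule.mem_span_singleton_self _
  obtain ⟨r, hr⟩ := Submodule.mem_span_singleton.1 hmem
  have hr1 : r = 1 := by simpa using congr_fun hr 0
  simpa [hr1] using (congr_fun hr 1).symm

theorem Admissible.mem_cyc_of_map_mem {R S : Type*} [Ring R] [Ring S] {φ : R →+* S}
    (hφ : Function.Injective φ) {a b c d : R} (hab : Admissible a b)
    (h : ![φ c, φ d] ∈ cyc ![φ a, φ b]) : ![c, d] ∈ cyc ![a, b] := by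
  obtain ⟨_, _, γ, hγ⟩ := hab
  have hrow : γ.val.row 0 = ![a, b] := by rw [hγ]; rfl
  have hmap (x y : R) : φ ∘ ![x, y] = ![φ x, φ y] := by ext j; fin_cases j <;> rfl
  rw [cyc, ← hrow]
  refine mem_span_row_of_map_mem hφ γ 0 ?_
  rwa [hmap, show (γ.val.map φ).row 0 = φ ∘ γ.val.row 0 from rfl, hrow, hmap]

theorem stmt14 {R S : Type*} [Ring R] [Ring S] (φ : R →+* S) :
    Function.Injective φ ↔
      ∀ a b c d : R, Admissible a b → Admissible c d →
        cyc ![φ a, φ b] = cyc ![φ c, φ d] → cyc ![a, b] = cyc ![c, d] := by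
  constructor
  · intro hφ a b c d hab hcd h
    apply le_antisymm <;> rw [cyc, Submodule.span_singleton_le_iff_mem]
    · exact hcd.mem_cyc_of_map_mem hφ (h ▸ Submodule.mem_span_singleton_self _)
    · exact hab.mem_cyc_of_map_mem hφ (h.symm ▸ Submodule.mem_span_singleton_self _)
  · intro H x y hxy
    refine cyc_vecCons_one_injective (H 1 x 1 y (admissible_one x) (admissible_one y) ?_)
    rw [map_one, hxy]
end

section
/- For a unital ring homomorphism φ: R → S, the condition that y^φ ∈ S^× implies y ∈ R^× for all y ∈ R is equivalent to: ker(φ) is contained in the Jacobson radical of R, and the units of the image ring R^φ are exactly S^× ∩ R^φ. -/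
open Matrix

/-!
Factor `φ` as the surjection `R ↠ R^φ` followed by the inclusion `R^φ ↪ S`. Since `1 + rad R`
consists of units, a surjection reflects units exactly when its kernel lies in `rad R`; the
inclusion reflects units exactly when `(R^φ)^× = S^× ∩ R^φ`; and a composite whose first factor is
surjective reflects units iff both factors do.
-/

theorem isUnit_of_isUnit_mul_of_isUnit_mul_swap {M : Type*} [Monoid M] {a b : M}
    (hab : IsUnit (a * b)) (hba : IsUnit (b * a)) : IsUnit a := by
  obtain ⟨c, hc⟩ := hab.exists_right_inv
  obtain ⟨d, hd⟩ := hba.exists_left_inv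
  exact isUnit_iff_exists_and_exists.2
    ⟨⟨b * c, by rw [← mul_assoc, hc]⟩, ⟨d * b, by rw [mul_assoc, hd]⟩⟩

theorem Ideal.isUnit_of_sub_one_mem_jacobson_bot' {R : Type*} [Ring R] {r : R}
    (h : r - 1 ∈ jacobson (⊥ : Ideal R)) : IsUnit r := by
  obtain ⟨s, hs⟩ := exists_mul_sub_mem_of_sub_one_mem_jacobson r h
  rw [mem_bot, sub_eq_zero] at hs
  -- the left inverse `s` of `r` again lies in `1 + rad R`, so it has a left inverse as well
  have hs' : s - 1 ∈ jacobson (⊥ : Ideal R) := by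
    have : s - 1 = -(s * (r - 1)) := by rw [mul_sub, hs, mul_one, neg_sub]
    exact this ▸ neg_mem (mul_mem_left _ s h)
  obtain ⟨t, ht⟩ := exists_mul_sub_mem_of_sub_one_mem_jacobson s hs'
  rw [mem_bot, sub_eq_zero] at ht
  have htr : t = r := left_inv_eq_right_inv ht hs
  exact isUnit_iff_exists.2 ⟨s, htr ▸ ht, hs⟩

namespace RingHom

theorem isLocalHom_of_comp_of_surjective {R S T : Type*} [Semiring R] [Semiring S] [Semiring T]
    (f : R →+* S) (g : S →+* T) [IsLocalHom (g.comp f)] (hf : Function.Surjective f) :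
    IsLocalHom g where
  map_nonunit x hx := by
    obtain ⟨y, rfl⟩ := hf x
    exact (IsUnit.of_map (g.comp f) y hx).map f

theorem ker_le_jacobson_bot_of_isLocalHom {R S : Type*} [Ring R] [Semiring S] (f : R →+* S)
    [IsLocalHom f] : ker f ≤ Ideal.jacobson ⊥ := by
  intro x hx
  refine Ideal.mem_jacobson_iff.2 fun y => ?_
  obtain ⟨u, hu⟩ := (isUnit_map_iff f (y * x + 1)).1 (by simp [mem_ker.1 hx])
  refine ⟨↑u⁻¹, ?_⟩
  rw [mul_assoc, ← mul_add_one, ← hu, Units.inv_mul, sub_self]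
  exact zero_mem _

theorem isLocalHom_of_surjective_of_ker_le_jacobson_bot {R S : Type*} [Ring R] [Ring S]
    {f : R →+* S} (hf : Function.Surjective f) (hker : ker f ≤ Ideal.jacobson ⊥) :
    IsLocalHom f where
  map_nonunit y hy := by
    obtain ⟨u, hu⟩ := hy
    obtain ⟨z, hz⟩ := hf ↑u⁻¹
    have sub_one_mem : ∀ a, f a = 1 → a - 1 ∈ Ideal.jacobson ⊥ := fun a ha =>
      hker (by rw [mem_ker, map_sub, ha, map_one, sub_self])
    refine isUnit_of_isUnit_mul_of_isUnit_mul_swap (b := z)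
      (Ideal.isUnit_of_sub_one_mem_jacobson_bot' (sub_one_mem _ ?_))
      (Ideal.isUnit_of_sub_one_mem_jacobson_bot' (sub_one_mem _ ?_))
    · rw [map_mul, ← hu, hz, Units.mul_inv]
    · rw [map_mul, ← hu, hz, Units.inv_mul]

end RingHom

open RingHom in
theorem stmt16 {R S : Type*} [Ring R] [Ring S] (φ : R →+* S) :
    (∀ y : R, IsUnit (φ y) → IsUnit y) ↔
      (RingHom.ker φ ≤ Ideal.jacobson (⊥ : Ideal R)) ∧
      (∀ x : φ.range, IsUnit x ↔ IsUnit (x : S)) := by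
  have isLocalHom_subtype_iff : IsLocalHom φ.range.subtype ↔
      ∀ x : φ.range, IsUnit x ↔ IsUnit (x : S) :=
    ⟨fun _ x => (isUnit_map_iff φ.range.subtype x).symm, fun h => ⟨fun x => (h x).2⟩⟩
  rw [← isLocalHom_subtype_iff, ← φ.ker_rangeRestrict]
  change (∀ y, IsUnit (φ.range.subtype.comp φ.rangeRestrict y) → IsUnit y) ↔ _
  constructor
  · intro h
    have : IsLocalHom (φ.range.subtype.comp φ.rangeRestrict) := ⟨h⟩
    have := isLocalHom_of_comp φ.rangeRestrict φ.range.subtype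
    exact ⟨ker_le_jacobson_bot_of_isLocalHom _,
      isLocalHom_of_comp_of_surjective _ _ φ.rangeRestrict_surjective⟩
  · rintro ⟨hker, _⟩
    have := isLocalHom_of_surjective_of_ker_le_jacobson_bot φ.rangeRestrict_surjective hker
    exact IsLocalHom.map_nonunit
end

section
/- Let φ: R → S be a surjective unital ring homomorphism and suppose S is a GE₂-ring. Then the induced map φ̄: P(R) → P(S) of projective lines is surjective. -/
open Matrix

/-- Elementary transvections in `GL₂(R)`. -/
def Transvections (R : Type*) [Ring R] : Set (Matrix (Fin 2) (Fin 2) R)ˣ :=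
  {γ | ∃ x : R, (γ.val) = Matrix.of ![![1, 0], ![x, 1]] ∨
        (γ.val) = Matrix.of ![![1, x], ![0, 1]]}

/-- Invertible diagonal matrices in `GL₂(R)`. -/
def Diagonals (R : Type*) [Ring R] : Set (Matrix (Fin 2) (Fin 2) R)ˣ :=
  {γ | ∃ a b : R, (γ.val) = Matrix.of ![![a, 0], ![0, b]]}

/-!
Every `γ ∈ GL₂(S)` has the form `D · ε` with `D` invertible diagonal and `ε` a product of
transvections: the generating set is closed under inverses, and diagonal matrices normalise the
transvections, so diagonal factors can be pushed to the left. Transvections lift along the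
surjection `φ`, hence `ε` is the image of some `M ∈ GL₂(R)`, and the first row of `γ` is a unit
multiple of `φ` applied to the first row of `M`.
-/

namespace Matrix

variable {n : Type*} [Fintype n] [DecidableEq n]

theorem isUnit_of_isUnit_diagonal {S : Type*} [Semiring S] {v : n → S}
    (h : IsUnit (diagonal v)) : IsUnit v := by
  obtain ⟨u, hu⟩ := h
  refine isUnit_iff_exists.2
    ⟨fun i => (↑u⁻¹ : Matrix n n S) i i, funext fun i => ?_, funext fun i => ?_⟩
  · simpa [hu] using congrFun (congrFun u.mul_inv i) i
  · simpa [hu] using congrFun (congrFun u.inv_mul i) i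

variable (n) in
abbrev diagonalUnits (S : Type*) [Semiring S] : (n → S)ˣ →* (Matrix n n S)ˣ :=
  Units.map (diagonalRingHom n S).toMonoidHom

end Matrix

section Transvections

variable {S : Type*} [Ring S]

def lowerTransvection (x : S) : (Matrix (Fin 2) (Fin 2) S)ˣ where
  val := !![1, 0; x, 1]
  inv := !![1, 0; -x, 1]
  val_inv := by simp [one_fin_two]
  inv_val := by simp [one_fin_two]

def upperTransvection (x : S) : (Matrix (Fin 2) (Fin 2) S)ˣ where
  val := !![1, x; 0, 1]
  inv := !![1, -x; 0, 1]
  val_inv := by simp [one_fin_two]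
  inv_val := by simp [one_fin_two]

theorem mem_transvections_iff {t : (Matrix (Fin 2) (Fin 2) S)ˣ} :
    t ∈ Transvections S ↔ ∃ x, t = lowerTransvection x ∨ t = upperTransvection x := by
  simp only [Transvections, Units.ext_iff]
  rfl

theorem lowerTransvection_inv (x : S) : (lowerTransvection x)⁻¹ = lowerTransvection (-x) := by
  ext : 1; simp [lowerTransvection]

theorem upperTransvection_inv (x : S) : (upperTransvection x)⁻¹ = upperTransvection (-x) := by
  ext : 1; simp [upperTransvection]

theorem inv_mem_transvections {t : (Matrix (Fin 2) (Fin 2) S)ˣ} (ht : t ∈ Transvections S) :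
    t⁻¹ ∈ Transvections S := by
  obtain ⟨x, rfl | rfl⟩ := mem_transvections_iff.1 ht
  · exact mem_transvections_iff.2 ⟨-x, Or.inl (lowerTransvection_inv x)⟩
  · exact mem_transvections_iff.2 ⟨-x, Or.inr (upperTransvection_inv x)⟩

theorem diagonalUnits_inv_mul_mul_mem_transvections (d : (Fin 2 → S)ˣ)
    {t : (Matrix (Fin 2) (Fin 2) S)ˣ} (ht : t ∈ Transvections S) :
    (diagonalUnits (Fin 2) S d)⁻¹ * t * diagonalUnits (Fin 2) S d ∈ Transvections S := by
  have hd (i : Fin 2) : (↑d⁻¹ : Fin 2 → S) i * (d : Fin 2 → S) i = 1 := congrFun d.inv_mul i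
  obtain ⟨x, rfl | rfl⟩ := mem_transvections_iff.1 ht
  · refine ⟨(↑d⁻¹ : Fin 2 → S) 1 * x * (d : Fin 2 → S) 0, Or.inl ?_⟩
    simp [lowerTransvection, diagonal_fin_two, hd, mul_assoc]
  · refine ⟨(↑d⁻¹ : Fin 2 → S) 0 * x * (d : Fin 2 → S) 1, Or.inr ?_⟩
    simp [upperTransvection, diagonal_fin_two, hd, mul_assoc]

end Transvections

section Lifting

variable {R S : Type*} [Ring R] [Ring S]

theorem exists_eq_diagonalUnits_of_mem_diagonals {γ : (Matrix (Fin 2) (Fin 2) S)ˣ}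
    (hγ : γ ∈ Diagonals S) : ∃ d, γ = diagonalUnits (Fin 2) S d := by
  obtain ⟨a, b, hab⟩ := hγ
  have : IsUnit (diagonal ![a, b]) := by rw [diagonal_vec2, ← hab]; exact γ.isUnit
  obtain ⟨d, hd⟩ := isUnit_of_isUnit_diagonal this
  exact ⟨d, Units.ext (by simp [hd, hab, diagonal_vec2])⟩

theorem diagonalUnits_mem_diagonals (d : (Fin 2 → S)ˣ) :
    diagonalUnits (Fin 2) S d ∈ Diagonals S :=
  ⟨(d : Fin 2 → S) 0, (d : Fin 2 → S) 1, diagonal_fin_two _⟩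

theorem inv_mem_transvections_union_diagonals {γ : (Matrix (Fin 2) (Fin 2) S)ˣ}
    (hγ : γ ∈ Transvections S ∪ Diagonals S) : γ⁻¹ ∈ Transvections S ∪ Diagonals S := by
  rcases hγ with ht | hd
  · exact Or.inl (inv_mem_transvections ht)
  · obtain ⟨d, rfl⟩ := exists_eq_diagonalUnits_of_mem_diagonals hd
    exact Or.inr (map_inv (diagonalUnits (Fin 2) S) d ▸ diagonalUnits_mem_diagonals d⁻¹)

theorem exists_map_eq_of_mem_transvections {φ : R →+* S} (hφ : Function.Surjective φ)
    {t : (Matrix (Fin 2) (Fin 2) S)ˣ} (ht : t ∈ Transvections S) :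
    ∃ T, Units.map φ.mapMatrix.toMonoidHom T = t := by
  obtain ⟨x, rfl | rfl⟩ := mem_transvections_iff.1 ht <;> obtain ⟨r, rfl⟩ := hφ x
  · exact ⟨lowerTransvection r,
      Units.ext (by simp [lowerTransvection, ← Matrix.ext_iff, Fin.forall_fin_two])⟩
  · exact ⟨upperTransvection r,
      Units.ext (by simp [upperTransvection, ← Matrix.ext_iff, Fin.forall_fin_two])⟩

def IsDiagonalMulMap (φ : R →+* S) (γ : (Matrix (Fin 2) (Fin 2) S)ˣ) : Prop :=
  ∃ d M, γ = diagonalUnits (Fin 2) S d * Units.map φ.mapMatrix.toMonoidHom M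

theorem IsDiagonalMulMap.mul_left {φ : R →+* S} (hφ : Function.Surjective φ)
    {x γ : (Matrix (Fin 2) (Fin 2) S)ˣ} (hx : x ∈ Transvections S ∪ Diagonals S)
    (hγ : IsDiagonalMulMap φ γ) : IsDiagonalMulMap φ (x * γ) := by
  obtain ⟨d, M, rfl⟩ := hγ
  rcases hx with ht | hd
  · obtain ⟨T, hT⟩ := exists_map_eq_of_mem_transvections hφ
      (diagonalUnits_inv_mul_mul_mem_transvections d ht)
    exact ⟨d, T * M, by rw [map_mul, hT]; group⟩
  · obtain ⟨e, rfl⟩ := exists_eq_diagonalUnits_of_mem_diagonals hd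
    exact ⟨e * d, M, by rw [map_mul, mul_assoc]⟩

theorem isDiagonalMulMap_of_mem_closure {φ : R →+* S} (hφ : Function.Surjective φ)
    {γ : (Matrix (Fin 2) (Fin 2) S)ˣ}
    (hγ : γ ∈ Subgroup.closure (Transvections S ∪ Diagonals S)) : IsDiagonalMulMap φ γ := by
  induction hγ using Subgroup.closure_induction_left with
  | one => exact ⟨1, 1, by simp⟩
  | mul_left x hx _ _ ih => exact ih.mul_left hφ hx
  | inv_mul_cancel x hx _ _ ih =>
    exact ih.mul_left hφ (inv_mem_transvections_union_diagonals hx)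

end Lifting

theorem admissible_row_zero {R : Type*} [Ring R] (M : (Matrix (Fin 2) (Fin 2) R)ˣ) :
    Admissible (M.val 0 0) (M.val 0 1) :=
  ⟨M.val 1 0, M.val 1 1, eta_fin_two M.val ▸ M.isUnit⟩

theorem cyc_smul_of_isUnit {S : Type*} [Ring S] {a : S} (ha : IsUnit a) (v : Fin 2 → S) :
    cyc (a • v) = cyc v := by
  obtain ⟨u, rfl⟩ := ha
  exact Submodule.span_singleton_group_smul_eq S u v

theorem cyc_vecMul_diagonalUnits_mul_map {R S : Type*} [Ring R] [Ring S] (φ : R →+* S)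
    (d : (Fin 2 → S)ˣ) (M : (Matrix (Fin 2) (Fin 2) R)ˣ) :
    cyc (![1, 0] ᵥ* (diagonalUnits (Fin 2) S d * Units.map φ.mapMatrix.toMonoidHom M).val) =
      cyc ![φ (M.val 0 0), φ (M.val 0 1)] := by
  have hrow : ![1, 0] ᵥ* diagonal (d : Fin 2 → S) = (d : Fin 2 → S) 0 • ![1, 0] := by
    ext i; fin_cases i <;> simp [vecMul_diagonal]
  have hd0 : IsUnit ((d : Fin 2 → S) 0) := d.isUnit.map (Pi.evalMonoidHom (fun _ => S) 0)
  change cyc (![1, 0] ᵥ* (diagonal (d : Fin 2 → S) * M.val.map φ)) = _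
  rw [← vecMul_vecMul, hrow, smul_vecMul, cyc_smul_of_isUnit hd0]
  congr 1
  ext i; fin_cases i <;> simp [vecMul, dotProduct]

theorem stmt18 {R S : Type*} [Ring R] [Ring S] (φ : R →+* S)
    (hφ : Function.Surjective φ)
    (hGE : Subgroup.closure (Transvections S ∪ Diagonals S) = ⊤) :
    ∀ q ∈ ProjLine S, ∃ a b : R, Admissible a b ∧ q = cyc ![φ a, φ b] := by
  rintro q ⟨γ, rfl⟩
  obtain ⟨d, M, rfl⟩ := isDiagonalMulMap_of_mem_closure hφ (hGE ▸ Subgroup.mem_top γ)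
  exact ⟨M.val 0 0, M.val 0 1, admissible_row_zero M, cyc_vecMul_diagonalUnits_mul_map φ d M⟩
end
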